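/- Let f : [0,1] → ℝ be continuous. Then for all x,y ∈ [0,1], d_f(x,y) ≤ 2·sup{ |f(s) − f(t)| : s,t ∈ [0,1], |s−t| ≤ |x−y| }. Consequently the identity map from [0,1] with the Euclidean metric to [0,1] with the pseudometric d_f is uniformly continuous, and the topology induced by d_f on [0,1] is compact (so the associated quotient metric space, obtained by identifying points at d_f-distance zero, is a compact metric space). -/

import Mathlib

/-!
The infimum of `f` over the interval between `x` and `y` is attained at some `c` there, so
`d_f(x, y) = (f x - f c) + (f y - f c)` with `|x - c|, |y - c| ≤ |x - y|`: both terms are bounded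
by the modulus of continuity of `f` at `|x - y|`. Uniform continuity of `f` on the compact interval
makes this small uniformly, and Bolzano–Weierstrass then gives compactness for `d_f`.
-/

open Filter

noncomputable section

/-- `d_f(x,y) = f(x) + f(y) − 2·inf{f(s) : x∧y ≤ s ≤ x∨y}`. -/
def dPseudo (f : ℝ → ℝ) (x y : ℝ) : ℝ :=
  f x + f y - 2 * sInf (f '' Set.Icc (min x y) (max x y))

open Set Topology

section

variable {f : ℝ → ℝ} {x y : ℝ}

theorem exists_dPseudo_eq_of_continuousOn (hf : ContinuousOn f (uIcc x y)) :
    ∃ c ∈ uIcc x y, IsMinOn f (uIcc x y) c ∧ dPseudo f x y = (f x - f c) + (f y - f c) := by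
  obtain ⟨c, hc, hmin⟩ := isCompact_uIcc.exists_isMinOn nonempty_uIcc hf
  have hInf : sInf (f '' uIcc x y) = f c :=
    IsLeast.csInf_eq ⟨mem_image_of_mem f hc, forall_mem_image.2 fun _ hs => hmin hs⟩
  refine ⟨c, hc, hmin, ?_⟩
  rw [dPseudo, ← uIcc, hInf]
  ring

theorem dPseudo_nonneg (hf : ContinuousOn f (uIcc x y)) : 0 ≤ dPseudo f x y := by
  obtain ⟨c, -, hmin, hd⟩ := exists_dPseudo_eq_of_continuousOn hf
  have hx : f c ≤ f x := hmin left_mem_uIcc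
  have hy : f c ≤ f y := hmin right_mem_uIcc
  linarith

theorem dPseudo_le_two_mul {M : ℝ} (hf : ContinuousOn f (uIcc x y))
    (hM : ∀ c ∈ uIcc x y, |x - c| ≤ |x - y| → |y - c| ≤ |x - y| →
      |f x - f c| ≤ M ∧ |f y - f c| ≤ M) :
    dPseudo f x y ≤ 2 * M := by
  obtain ⟨c, hc, -, hd⟩ := exists_dPseudo_eq_of_continuousOn hf
  obtain ⟨hxc, hyc⟩ := hM c hc (by simpa [abs_sub_comm] using abs_sub_left_of_mem_uIcc hc)
    (by simpa [abs_sub_comm] using abs_sub_right_of_mem_uIcc hc)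
  rw [hd]
  linarith [le_abs_self (f x - f c), le_abs_self (f y - f c)]

variable {a b : ℝ}

def modulusOfContinuity (f : ℝ → ℝ) (a b δ : ℝ) : ℝ :=
  sSup {r : ℝ | ∃ s ∈ Icc a b, ∃ t ∈ Icc a b, |s - t| ≤ δ ∧ r = |f s - f t|}

theorem abs_sub_le_modulusOfContinuity (hf : ContinuousOn f (Icc a b)) {s t δ : ℝ}
    (hs : s ∈ Icc a b) (ht : t ∈ Icc a b) (hst : |s - t| ≤ δ) :
    |f s - f t| ≤ modulusOfContinuity f a b δ := by
  obtain ⟨C, hC⟩ := isCompact_Icc.exists_bound_of_continuousOn hf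
  refine le_csSup ⟨2 * C, ?_⟩ ⟨s, hs, t, ht, hst, rfl⟩
  rintro r ⟨s', hs', t', ht', -, rfl⟩
  calc |f s' - f t'| ≤ |f s'| + |f t'| := abs_sub _ _
    _ ≤ 2 * C := by
      simp only [Real.norm_eq_abs] at hC
      linarith [hC s' hs', hC t' ht']

theorem dPseudo_le_two_mul_modulusOfContinuity (hf : ContinuousOn f (Icc a b))
    (hx : x ∈ Icc a b) (hy : y ∈ Icc a b) :
    dPseudo f x y ≤ 2 * modulusOfContinuity f a b |x - y| := by
  have hsub := uIcc_subset_Icc hx hy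
  refine dPseudo_le_two_mul (hf.mono hsub) fun c hc hxc hyc => ?_
  exact ⟨abs_sub_le_modulusOfContinuity hf hx (hsub hc) hxc,
    abs_sub_le_modulusOfContinuity hf hy (hsub hc) hyc⟩

theorem exists_pos_forall_dPseudo_lt (hf : ContinuousOn f (Icc a b)) {ε : ℝ} (hε : 0 < ε) :
    ∃ δ > 0, ∀ x ∈ Icc a b, ∀ y ∈ Icc a b, |x - y| < δ → dPseudo f x y < ε := by
  obtain ⟨δ, hδ, hfδ⟩ := Metric.uniformContinuousOn_iff.1
    (isCompact_Icc.uniformContinuousOn_of_continuous hf) (ε / 3) (by positivity)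
  refine ⟨δ, hδ, fun x hx y hy hxy => ?_⟩
  have hsub := uIcc_subset_Icc hx hy
  have hclose : ∀ z ∈ Icc a b, ∀ c ∈ uIcc x y, |z - c| ≤ |x - y| →
      |f z - f c| ≤ ε / 3 :=
    fun z hz c hc hzc => (hfδ z hz c (hsub hc) (hzc.trans_lt hxy)).le
  calc dPseudo f x y ≤ 2 * (ε / 3) := dPseudo_le_two_mul (hf.mono hsub)
        fun c hc hxc hyc => ⟨hclose x hx c hc hxc, hclose y hy c hc hyc⟩
    _ < ε := by linarith

theorem tendsto_dPseudo_of_tendsto {α : Type*} {l : Filter α} {u : α → ℝ}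
    (hf : ContinuousOn f (Icc a b)) (hu : ∀ᶠ n in l, u n ∈ Icc a b) (hx : x ∈ Icc a b)
    (hux : Tendsto u l (𝓝 x)) : Tendsto (fun n => dPseudo f (u n) x) l (𝓝 0) := by
  refine Metric.tendsto_nhds.2 fun ε hε => ?_
  obtain ⟨δ, hδ, hd⟩ := exists_pos_forall_dPseudo_lt hf hε
  filter_upwards [hu, Metric.tendsto_nhds.1 hux δ hδ] with n hun hdist
  have hnonneg := dPseudo_nonneg (hf.mono (uIcc_subset_Icc hun hx))
  rw [Real.dist_eq, sub_zero, abs_of_nonneg hnonneg]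
  exact hd _ hun _ hx (Real.dist_eq _ _ ▸ hdist)

end

/-- for continuous `f : [0,1] → ℝ`,
`d_f(x,y) ≤ 2·sup{|f(s)−f(t)| : |s−t| ≤ |x−y|}`; hence the identity map from `([0,1],|·|)`
to `([0,1],d_f)` is uniformly continuous, and the topology induced by `d_f` on `[0,1]` is
compact (stated as sequential compactness for the pseudometric `d_f`, which is equivalent to
compactness of the associated quotient metric space). -/
theorem stmt_15 (f : ℝ → ℝ) (hf : ContinuousOn f (Set.Icc 0 1)) :
    (∀ x ∈ Set.Icc (0:ℝ) 1, ∀ y ∈ Set.Icc (0:ℝ) 1,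
      dPseudo f x y ≤ 2 * sSup {r : ℝ | ∃ s ∈ Set.Icc (0:ℝ) 1, ∃ t ∈ Set.Icc (0:ℝ) 1,
        |s - t| ≤ |x - y| ∧ r = |f s - f t|}) ∧
    (∀ ε : ℝ, 0 < ε → ∃ δ : ℝ, 0 < δ ∧ ∀ x ∈ Set.Icc (0:ℝ) 1, ∀ y ∈ Set.Icc (0:ℝ) 1,
      |x - y| < δ → dPseudo f x y < ε) ∧
    (∀ u : ℕ → ℝ, (∀ n, u n ∈ Set.Icc (0:ℝ) 1) →
      ∃ x ∈ Set.Icc (0:ℝ) 1, ∃ φ : ℕ → ℕ, StrictMono φ ∧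
        Tendsto (fun n => dPseudo f (u (φ n)) x) atTop (nhds 0)) := by
  refine ⟨fun x hx y hy => dPseudo_le_two_mul_modulusOfContinuity hf hx hy,
    fun ε hε => exists_pos_forall_dPseudo_lt hf hε, fun u hu => ?_⟩
  obtain ⟨x, hx, φ, hφ, hux⟩ := isCompact_Icc.tendsto_subseq hu
  exact ⟨x, hx, φ, hφ, tendsto_dPseudo_of_tendsto hf (.of_forall fun n => hu (φ n)) hx hux⟩

end
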